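/- arXiv:1408.6725 — 2 statements merged into one kernel-verified Lean document; each statement's English description precedes it below -/
import Mathlib

section
/- In a 4-way latin square of order 5, no row can consist entirely of fixed cells while another row has exactly 1 fixed cell. -/
/-- A μ-way latin square of order n: μ latin squares on symbols `Fin n` such that
in every cell the μ entries are all equal or pairwise distinct. -/
def IsMuWayLatinSquare {μ n : ℕ} (L : Fin μ → Fin n → Fin n → Fin n) : Prop :=
  (∀ m i, Function.Injective (L m i)) ∧
  (∀ m j, Function.Injective (fun i => L m i j)) ∧
  (∀ i j, (∀ a b, L a i j = L b i j) ∨ Function.Injective (fun a => L a i j))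

/-- A cell is fixed when the μ entries there coincide. -/
def IsFixedCell {μ n : ℕ} (L : Fin μ → Fin n → Fin n → Fin n) (i j : Fin n) : Prop :=
  ∀ a b, L a i j = L b i j

instance {μ n : ℕ} (L : Fin μ → Fin n → Fin n → Fin n) (i j : Fin n) :
    Decidable (IsFixedCell L i j) :=
  inferInstanceAs (Decidable (∀ a b, L a i j = L b i j))

/-- The number of fixed cells. -/
def numFixed {μ n : ℕ} (L : Fin μ → Fin n → Fin n → Fin n) : ℕ :=
  (Finset.univ.filter fun p : Fin n × Fin n => IsFixedCell L p.1 p.2).card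

/-- The number of fixed cells in row `i`. -/
def rowFixed {μ n : ℕ} (L : Fin μ → Fin n → Fin n → Fin n) (i : Fin n) : ℕ :=
  (Finset.univ.filter fun j : Fin n => IsFixedCell L i j).card

/-- The intersection spectrum `I^μ[n]`. -/
def Spectrum (μ n : ℕ) : Set ℕ :=
  {k | ∃ L : Fin μ → Fin n → Fin n → Fin n, IsMuWayLatinSquare L ∧ numFixed L = k}

/-!
Let row `i₁` be fixed, so all four squares share it, and let `(i₂, j₀)` be the only fixed cell
of row `i₂`, with common entry `w`. Choose `j₁ ≠ j₀` whose entry in row `i₁` is not `w`. The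
four entries of the non-fixed cell `(i₂, j₁)` are distinct and, by the column condition, avoid
the entry of `(i₁, j₁)`; with five symbols they therefore exhaust the remaining four, so some
square `a` has `w` at `(i₂, j₁)` as well as at `(i₂, j₀)`, contradicting the row condition.
-/

theorem Function.Injective.exists_ne_apply_ne {α β : Type*} [Fintype α] {f : α → β}
    (hf : f.Injective) (hcard : 2 < Fintype.card α) (a : α) (b : β) :
    ∃ x, x ≠ a ∧ f x ≠ b := by
  classical
  by_contra! H
  have hmaps : Set.MapsTo f (Finset.univ.erase a : Finset α) ({b} : Finset β) := fun x hx =>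
    Finset.mem_singleton.mpr (H x (Finset.ne_of_mem_erase hx))
  have := Finset.card_le_card_of_injOn f hmaps hf.injOn
  rw [Finset.card_erase_of_mem (Finset.mem_univ a), Finset.card_univ,
    Finset.card_singleton] at this
  omega

section

variable {μ n : ℕ} {L : Fin μ → Fin n → Fin n → Fin n}

theorem rowFixed_eq_iff_forall_isFixedCell {i : Fin n} :
    rowFixed L i = n ↔ ∀ j, IsFixedCell L i j := by
  have h := Finset.card_filter_eq_iff (s := Finset.univ) (p := fun j => IsFixedCell L i j)
  simpa only [rowFixed, Finset.card_fin, Finset.mem_univ, true_implies] using h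

theorem rowFixed_eq_one_iff {i : Fin n} :
    rowFixed L i = 1 ↔ ∃ j₀, ∀ j, IsFixedCell L i j ↔ j = j₀ := by
  simp only [rowFixed, Finset.card_eq_one, Finset.ext_iff, Finset.mem_filter,
    Finset.mem_univ, true_and, Finset.mem_singleton]

theorem IsMuWayLatinSquare.injective_of_not_isFixedCell (hL : IsMuWayLatinSquare L)
    {i j : Fin n} (h : ¬ IsFixedCell L i j) : Function.Injective (fun a => L a i j) :=
  (hL.2.2 i j).resolve_left h

theorem IsMuWayLatinSquare.exists_eq_of_isFixedCell_of_not_isFixedCell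
    (hL : IsMuWayLatinSquare L) (hμ : n ≤ μ + 1) {i₁ i₂ j : Fin n} (hne : i₁ ≠ i₂)
    (hfix : IsFixedCell L i₁ j) (hnfix : ¬ IsFixedCell L i₂ j) (m : Fin μ) {x : Fin n}
    (hx : x ≠ L m i₁ j) : ∃ a, L a i₂ j = x := by
  have himage : Finset.univ.image (fun a => L a i₂ j) = Finset.univ.erase (L m i₁ j) := by
    refine Finset.eq_of_subset_of_card_le (fun y hy => ?_) ?_
    · obtain ⟨a, -, rfl⟩ := Finset.mem_image.mp hy
      refine Finset.mem_erase.mpr ⟨fun h => hne (hL.2.1 a j ?_), Finset.mem_univ _⟩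
      exact (hfix a m).trans h.symm
    · rw [Finset.card_erase_of_mem (Finset.mem_univ _),
        Finset.card_image_of_injective _ (hL.injective_of_not_isFixedCell hnfix)]
      simp only [Finset.card_univ, Fintype.card_fin]
      omega
  obtain ⟨a, -, ha⟩ := Finset.mem_image.mp
    (himage ▸ Finset.mem_erase.mpr ⟨hx, Finset.mem_univ x⟩)
  exact ⟨a, ha⟩

end

theorem stmt_8 (L : Fin 4 → Fin 5 → Fin 5 → Fin 5)
    (hL : IsMuWayLatinSquare L) (i₁ i₂ : Fin 5) (hne : i₁ ≠ i₂) :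
    ¬ (rowFixed L i₁ = 5 ∧ rowFixed L i₂ = 1) := by
  rintro ⟨h₁, h₂⟩
  have hrow₁ := rowFixed_eq_iff_forall_isFixedCell.mp h₁
  obtain ⟨j₀, hrow₂⟩ := rowFixed_eq_one_iff.mp h₂
  obtain ⟨j₁, hj₁, hw⟩ :=
    (hL.1 0 i₁).exists_ne_apply_ne (by simp) j₀ (L 0 i₂ j₀)
  obtain ⟨a, ha⟩ := hL.exists_eq_of_isFixedCell_of_not_isFixedCell le_rfl hne (hrow₁ j₁)
    (fun h => hj₁ ((hrow₂ j₁).mp h)) 0 (Ne.symm hw)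
  exact hj₁ (hL.1 a i₂ (ha.trans ((hrow₂ j₀).mpr rfl 0 a)))
end

section
/- There do not exist two latin squares of order 5 that agree in exactly 2 cells and differ in all the remaining 23 cells in such a way that together with two further latin squares they form a 4-way latin square; precisely, 2 ∉ I⁴[5]: there is no 4-way latin square of order 5 with exactly 2 fixed cells. -/
/-!
A cell that is not fixed holds `μ` pairwise distinct symbols, and none of them can be the symbol
of a fixed cell in the same row or column. So if a non-fixed cell sees two fixed cells with
different symbols, the pigeonhole principle forces `μ + 2 ≤ n`. With exactly two fixed cells
there is always such a cell: a third cell of their common row or column, or the corner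
`(r₂, c₁)` of the rectangle they span. The one exception is two fixed cells with the same symbol
`v` in different rows and columns; then in a third row the squares place `v` in `μ` different
columns, avoiding the two columns of the fixed cells, and again `μ + 2 ≤ n`.
-/

open Function Finset

theorem card_add_two_le_of_injective_of_forall_ne {α β : Type*} [Fintype α] [Fintype β]
    [DecidableEq β] {f : α → β} (hf : Injective f) {u v : β} (huv : u ≠ v)
    (hu : ∀ a, f a ≠ u) (hv : ∀ a, f a ≠ v) : Fintype.card α + 2 ≤ Fintype.card β := by
  have hdisj : Disjoint (univ.image f) {u, v} := by
    simp [disjoint_left, hu, hv]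
  have hcard := (univ.image f ∪ {u, v}).card_le_univ
  rwa [card_union_of_disjoint hdisj, card_image_of_injective _ hf, card_pair huv,
    card_univ] at hcard

theorem Fin.exists_ne_ne {n : ℕ} (hn : 3 ≤ n) (a b : Fin n) : ∃ c, c ≠ a ∧ c ≠ b := by
  have hlt : #({a, b} : Finset (Fin n)) < #(univ : Finset (Fin n)) := by
    rw [card_univ, Fintype.card_fin]
    exact card_le_two.trans_lt (by omega)
  obtain ⟨c, -, hc⟩ := exists_mem_notMem_of_card_lt_card hlt
  simp only [mem_insert, mem_singleton, not_or] at hc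
  exact ⟨c, hc⟩

namespace IsMuWayLatinSquare

variable {μ n : ℕ} {L : Fin μ → Fin n → Fin n → Fin n}

theorem injective_of_not_isFixedCell_s11 (hL : IsMuWayLatinSquare L) {i j : Fin n}
    (h : ¬IsFixedCell L i j) : Injective fun a => L a i j :=
  (hL.2.2 i j).resolve_left h

theorem ne_symbol_of_same_row (hL : IsMuWayLatinSquare L) {i j j' : Fin n} {v : Fin n}
    (hv : ∀ a, L a i j = v) (hj : j' ≠ j) (a : Fin μ) : L a i j' ≠ v := fun h =>
  hj (hL.1 a i (h.trans (hv a).symm))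

theorem ne_symbol_of_same_col (hL : IsMuWayLatinSquare L) {i i' j : Fin n} {v : Fin n}
    (hv : ∀ a, L a i j = v) (hi : i' ≠ i) (a : Fin μ) : L a i' j ≠ v := fun h =>
  hi (hL.2.1 a j (h.trans (hv a).symm))

theorem add_two_le_of_not_isFixedCell (hL : IsMuWayLatinSquare L) {i j u v : Fin n}
    (h : ¬IsFixedCell L i j) (huv : u ≠ v) (hu : ∀ a, L a i j ≠ u) (hv : ∀ a, L a i j ≠ v) :
    μ + 2 ≤ n := by
  simpa using card_add_two_le_of_injective_of_forall_ne
    (hL.injective_of_not_isFixedCell_s11 h) huv hu hv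

theorem add_two_le_of_fixed_same_symbol (hL : IsMuWayLatinSquare L) {r₁ c₁ r₂ c₂ v i : Fin n}
    (hc : c₁ ≠ c₂) (hv₁ : ∀ a, L a r₁ c₁ = v) (hv₂ : ∀ a, L a r₂ c₂ = v) (hi₁ : i ≠ r₁)
    (hi₂ : i ≠ r₂) (hrow : ∀ j, ¬IsFixedCell L i j) : μ + 2 ≤ n := by
  choose col hcol using fun a => (Finite.injective_iff_surjective.mp (hL.1 a i)) v
  have hcol_inj : Injective col := fun a b hab =>
    hL.injective_of_not_isFixedCell_s11 (hrow (col a)) <| show L a i (col a) = L b i (col a) by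
      rw [hcol a, hab, hcol b]
  have hne₁ : ∀ a, col a ≠ c₁ := fun a h => hL.ne_symbol_of_same_col hv₁ hi₁ a (h ▸ hcol a)
  have hne₂ : ∀ a, col a ≠ c₂ := fun a h => hL.ne_symbol_of_same_col hv₂ hi₂ a (h ▸ hcol a)
  simpa using card_add_two_le_of_injective_of_forall_ne hcol_inj hc hne₁ hne₂

theorem exists_isFixedCell_iff_of_numFixed_eq_two (h : numFixed L = 2) :
    ∃ p q : Fin n × Fin n, p ≠ q ∧ ∀ i j, IsFixedCell L i j ↔ (i, j) = p ∨ (i, j) = q := by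
  obtain ⟨p, q, hpq, hset⟩ := card_eq_two.mp h
  refine ⟨p, q, hpq, fun i j => ?_⟩
  have hmem := congrArg ((i, j) ∈ ·) hset
  simpa using hmem

theorem add_two_le_of_numFixed_eq_two (hL : IsMuWayLatinSquare L) (hn : 3 ≤ n)
    (h : numFixed L = 2) : μ + 2 ≤ n := by
  rcases Nat.eq_zero_or_pos μ with rfl | hμ
  · omega
  obtain ⟨⟨r₁, c₁⟩, ⟨r₂, c₂⟩, hpq, hfix⟩ := exists_isFixedCell_iff_of_numFixed_eq_two h
  have hnot : ∀ i j, (i, j) ≠ (r₁, c₁) → (i, j) ≠ (r₂, c₂) → ¬IsFixedCell L i j :=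
    fun i j h₁ h₂ hf => ((hfix i j).mp hf).elim h₁ h₂
  set a₀ : Fin μ := ⟨0, hμ⟩
  have hv₁ : ∀ a, L a r₁ c₁ = L a₀ r₁ c₁ := fun a => ((hfix r₁ c₁).mpr (.inl rfl)) a a₀
  have hv₂ : ∀ a, L a r₂ c₂ = L a₀ r₂ c₂ := fun a => ((hfix r₂ c₂).mpr (.inr rfl)) a a₀
  by_cases hr : r₁ = r₂
  · subst hr
    have hc : c₁ ≠ c₂ := by simpa using hpq
    obtain ⟨j, hj₁, hj₂⟩ := Fin.exists_ne_ne hn c₁ c₂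
    exact hL.add_two_le_of_not_isFixedCell (i := r₁) (j := j) (by apply hnot <;> simp [*])
      (fun h => hc (hL.1 a₀ r₁ h)) (hL.ne_symbol_of_same_row hv₁ hj₁)
      (hL.ne_symbol_of_same_row hv₂ hj₂)
  by_cases hc : c₁ = c₂
  · subst hc
    obtain ⟨i, hi₁, hi₂⟩ := Fin.exists_ne_ne hn r₁ r₂
    exact hL.add_two_le_of_not_isFixedCell (i := i) (j := c₁) (by apply hnot <;> simp [*])
      (fun h => hr (hL.2.1 a₀ c₁ h)) (hL.ne_symbol_of_same_col hv₁ hi₁)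
      (hL.ne_symbol_of_same_col hv₂ hi₂)
  by_cases hv : L a₀ r₁ c₁ = L a₀ r₂ c₂
  · obtain ⟨i, hi₁, hi₂⟩ := Fin.exists_ne_ne hn r₁ r₂
    exact hL.add_two_le_of_fixed_same_symbol hc hv₁ (hv ▸ hv₂) hi₁ hi₂
      fun j => by apply hnot <;> simp [*]
  · exact hL.add_two_le_of_not_isFixedCell (i := r₂) (j := c₁)
      (by apply hnot <;> simp [*, Ne.symm hr]) hv (hL.ne_symbol_of_same_col hv₁ (Ne.symm hr))
      (hL.ne_symbol_of_same_row hv₂ hc)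

end IsMuWayLatinSquare

theorem stmt_11 : (2 : ℕ) ∉ Spectrum 4 5 := by
  rintro ⟨L, hL, h⟩
  have := hL.add_two_le_of_numFixed_eq_two (by norm_num) h
  omega
end
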